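/- arXiv:1909.09717 — 2 statements merged into one kernel-verified Lean document; each statement's English description precedes it below -/
import Mathlib

section
/- Let A be a normed division algebra. Then the multilinear expressions (a,b,c) ↦ ⟨a, [b,c]⟩ and (a,b,c,d) ↦ ⟨a, [b,c,d]⟩ are totally skew-symmetric in their arguments; in particular ⟨a, [a,b]⟩ = 0 and ⟨a, [a,b,c]⟩ = 0 for all a, b, c ∈ A. -/
open scoped RealInnerProductSpace

/-- A normed division algebra: a real inner product space with an `ℝ`-bilinear
multiplication (not necessarily associative or commutative), a two-sided
multiplicative identity `one ≠ 0`, satisfying `‖a*b‖ = ‖a‖ * ‖b‖`. -/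
structure NormedDivisionAlgebra (A : Type*) [NormedAddCommGroup A] [InnerProductSpace ℝ A] where
  mul : A →ₗ[ℝ] A →ₗ[ℝ] A
  one : A
  one_ne_zero : one ≠ 0
  one_mul : ∀ a : A, mul one a = a
  mul_one : ∀ a : A, mul a one = a
  norm_mul : ∀ a b : A, ‖mul a b‖ = ‖a‖ * ‖b‖

namespace NormedDivisionAlgebra

variable {A : Type*} [NormedAddCommGroup A] [InnerProductSpace ℝ A]

/-- `Re a`: the orthogonal projection of `a` onto the real part `Re A = ℝ · 1`. -/
noncomputable def re (D : NormedDivisionAlgebra A) (a : A) : A :=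
  (⟪a, D.one⟫ / ‖D.one‖ ^ 2) • D.one

/-- `Im a`: the orthogonal projection of `a` onto the imaginary part `Im A = (ℝ · 1)ᗮ`. -/
noncomputable def im (D : NormedDivisionAlgebra A) (a : A) : A := a - D.re a

/-- The conjugate `conj a = Re a - Im a`. -/
noncomputable def conj (D : NormedDivisionAlgebra A) (a : A) : A := D.re a - D.im a

/-- The real part `Re A = ℝ · 1` as a submodule. -/
def ReSub (D : NormedDivisionAlgebra A) : Submodule ℝ A := Submodule.span ℝ {D.one}

/-- The imaginary part `Im A = (ℝ · 1)ᗮ` as a submodule. -/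
noncomputable def ImSub (D : NormedDivisionAlgebra A) : Submodule ℝ A := (Submodule.span ℝ {D.one})ᗮ

/-- The commutator `[a, b] = a*b - b*a`. -/
def comm (D : NormedDivisionAlgebra A) (a b : A) : A := D.mul a b - D.mul b a

/-- The associator `[a, b, c] = (a*b)*c - a*(b*c)`. -/
def assoc (D : NormedDivisionAlgebra A) (a b c : A) : A :=
  D.mul (D.mul a b) c - D.mul a (D.mul b c)

/-- The cross product `a × b = Im (a*b)` (intended for `a, b ∈ Im A`). -/
noncomputable def cross (D : NormedDivisionAlgebra A) (a b : A) : A := D.im (D.mul a b)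

end NormedDivisionAlgebra

/-!
Polarizing the composition law gives `⟪ab, ac⟫ = ‖a‖²⟪b, c⟫` and `⟪ac, bc⟫ = ⟪a, b⟫‖c‖²`, so
`⟪a, ab⟫ = ⟪a, ba⟫ = ‖a‖²⟪1, b⟫`; together with the adjointness `⟪ab, c⟫ = ⟪b, ā c⟫ = ⟪a, c b̄⟫`
this also gives `⟪a, (ab)c⟫ = ‖a‖²⟪b, c̄⟫ = ⟪a, a(bc)⟫`. Polarizing these two identities yields
skew-symmetry in the first two arguments. Adjointness further gives `ā(ab) = ‖a‖²b` with
`ā = 2⟪a, 1⟫ - a`, so the algebra is alternative and the associator is alternating, which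
supplies the remaining transpositions.
-/

section CompositionLaw

variable {E F G : Type*} [NormedAddCommGroup E] [InnerProductSpace ℝ E]
  [NormedAddCommGroup F] [InnerProductSpace ℝ F] [NormedAddCommGroup G] [InnerProductSpace ℝ G]
  {f : E →ₗ[ℝ] F →ₗ[ℝ] G}

theorem inner_apply_apply_same_left (hf : ∀ x y, ‖f x y‖ = ‖x‖ * ‖y‖) (a : E) (b c : F) :
    ⟪f a b, f a c⟫ = ‖a‖ ^ 2 * ⟪b, c⟫ := by
  have h := norm_add_sq_real (f a b) (f a c)
  rw [← map_add, hf, hf, hf, mul_pow, mul_pow, mul_pow, norm_add_sq_real] at h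
  linarith

theorem inner_apply_apply_same_right (hf : ∀ x y, ‖f x y‖ = ‖x‖ * ‖y‖) (a b : E) (c : F) :
    ⟪f a c, f b c⟫ = ⟪a, b⟫ * ‖c‖ ^ 2 := by
  rw [mul_comm]
  exact inner_apply_apply_same_left (f := f.flip) (fun x y => (hf y x).trans (mul_comm _ _)) c a b

theorem inner_apply_apply_add_inner_apply_apply_swap (hf : ∀ x y, ‖f x y‖ = ‖x‖ * ‖y‖)
    (a c : E) (b d : F) :
    ⟪f a b, f c d⟫ + ⟪f c b, f a d⟫ = 2 * ⟪a, c⟫ * ⟪b, d⟫ := by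
  have h := inner_apply_apply_same_left hf (a + c) b d
  simp only [map_add, LinearMap.add_apply, inner_add_left, inner_add_right,
    inner_apply_apply_same_left hf, norm_add_sq_real] at h
  linear_combination h

end CompositionLaw

namespace NormedDivisionAlgebra

variable {A : Type*} [NormedAddCommGroup A] [InnerProductSpace ℝ A] (D : NormedDivisionAlgebra A)

theorem norm_one : ‖D.one‖ = 1 := by
  have h := D.norm_mul D.one D.one
  rw [D.one_mul, eq_comm] at h
  exact (mul_eq_left₀ (norm_ne_zero_iff.2 D.one_ne_zero)).1 h

theorem conj_eq (a : A) : D.conj a = (2 * ⟪a, D.one⟫) • D.one - a := by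
  simp only [conj, im, re, D.norm_one]
  module

theorem conj_mul (a b : A) : D.mul (D.conj a) b = (2 * ⟪a, D.one⟫) • b - D.mul a b := by
  simp only [conj_eq, map_sub, map_smul, LinearMap.sub_apply, LinearMap.smul_apply, D.one_mul]

theorem mul_conj (a b : A) : D.mul a (D.conj b) = (2 * ⟪b, D.one⟫) • a - D.mul a b := by
  simp only [conj_eq, map_sub, map_smul, D.mul_one]

theorem conj_conj (a : A) : D.conj (D.conj a) = a := by
  simp only [conj_eq, inner_sub_left, real_inner_smul_left, real_inner_self_eq_norm_sq, D.norm_one]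
  module

theorem norm_conj (a : A) : ‖D.conj a‖ = ‖a‖ := by
  rw [← sq_eq_sq₀ (norm_nonneg _) (norm_nonneg _), conj_eq, norm_sub_sq_real, norm_smul,
    real_inner_smul_left, real_inner_comm, Real.norm_eq_abs, mul_pow, sq_abs, D.norm_one]
  ring

theorem inner_mul_eq_inner_conj_mul (a b c : A) :
    ⟪D.mul a b, c⟫ = ⟪b, D.mul (D.conj a) c⟫ := by
  have h := inner_apply_apply_add_inner_apply_apply_swap D.norm_mul a D.one b c
  rw [D.one_mul, D.one_mul] at h
  rw [conj_mul, inner_sub_right, real_inner_smul_right]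
  linarith

theorem inner_mul_eq_inner_mul_conj (a b c : A) :
    ⟪D.mul a b, c⟫ = ⟪a, D.mul c (D.conj b)⟫ := by
  have h := inner_apply_apply_add_inner_apply_apply_swap D.norm_mul a c b D.one
  rw [D.mul_one, D.mul_one, real_inner_comm a (D.mul c b)] at h
  rw [mul_conj, inner_sub_right, real_inner_smul_right]
  linarith

theorem conj_mul_mul (a b : A) : D.mul (D.conj a) (D.mul a b) = ‖a‖ ^ 2 • b := by
  refine ext_inner_right ℝ fun c => ?_
  rw [inner_mul_eq_inner_conj_mul, conj_conj, inner_apply_apply_same_left D.norm_mul,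
    real_inner_smul_left]

theorem mul_mul_conj (a b : A) : D.mul (D.mul b a) (D.conj a) = ‖a‖ ^ 2 • b := by
  refine ext_inner_right ℝ fun c => ?_
  rw [inner_mul_eq_inner_mul_conj, conj_conj, inner_apply_apply_same_right D.norm_mul,
    real_inner_smul_left, mul_comm]

theorem mul_mul_self_left (a b : A) :
    D.mul a (D.mul a b) = (2 * ⟪a, D.one⟫) • D.mul a b - ‖a‖ ^ 2 • b := by
  have h := D.conj_mul_mul (D.conj a) b
  rw [conj_conj, norm_conj, conj_mul, map_sub, map_smul] at h
  rw [← h]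
  abel

theorem mul_mul_self_right (a b : A) :
    D.mul (D.mul b a) a = (2 * ⟪a, D.one⟫) • D.mul b a - ‖a‖ ^ 2 • b := by
  have h := D.mul_mul_conj (D.conj a) b
  rw [conj_conj, norm_conj, mul_conj, map_sub, map_smul, LinearMap.sub_apply,
    LinearMap.smul_apply] at h
  rw [← h]
  abel

theorem mul_self (a : A) : D.mul a a = (2 * ⟪a, D.one⟫) • a - ‖a‖ ^ 2 • D.one := by
  simpa only [D.mul_one] using D.mul_mul_self_left a D.one

theorem assoc_self_left (a b : A) : D.assoc a a b = 0 := by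
  rw [assoc, mul_mul_self_left, mul_self, map_sub, map_smul, map_smul, LinearMap.sub_apply,
    LinearMap.smul_apply, LinearMap.smul_apply, D.one_mul, sub_self]

theorem assoc_self_right (a b : A) : D.assoc b a a = 0 := by
  rw [assoc, mul_mul_self_right, mul_self, map_sub, map_smul, map_smul, D.mul_one, sub_self]

theorem assoc_swap_left (a b c : A) : D.assoc a b c = - D.assoc b a c := by
  have h := D.assoc_self_left (a + b) c
  have ha := D.assoc_self_left a c
  have hb := D.assoc_self_left b c
  simp only [assoc, map_add, LinearMap.add_apply] at h ha hb ⊢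
  linear_combination (norm := module) h - ha - hb

theorem assoc_swap_right (a b c : A) : D.assoc a b c = - D.assoc a c b := by
  have h := D.assoc_self_right (b + c) a
  have hb := D.assoc_self_right b a
  have hc := D.assoc_self_right c a
  simp only [assoc, map_add, LinearMap.add_apply] at h hb hc ⊢
  linear_combination (norm := module) h - hb - hc

theorem inner_comm_self (a b : A) : ⟪a, D.comm a b⟫ = 0 := by
  have hl := inner_apply_apply_same_left D.norm_mul a D.one b
  have hr := inner_apply_apply_same_right D.norm_mul D.one b a
  rw [D.mul_one] at hl
  rw [D.one_mul] at hr
  rw [comm, inner_sub_right, hl, hr]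
  ring

theorem inner_assoc_self (a b c : A) : ⟪a, D.assoc a b c⟫ = 0 := by
  have h := inner_apply_apply_same_left D.norm_mul a D.one (D.mul b c)
  rw [D.mul_one] at h
  rw [assoc, inner_sub_right, h, real_inner_comm _ a, inner_mul_eq_inner_mul_conj,
    inner_apply_apply_same_left D.norm_mul, real_inner_comm (D.mul b c), inner_mul_eq_inner_mul_conj,
    D.one_mul, sub_self]

theorem inner_comm_swap (a b c : A) : ⟪a, D.comm b c⟫ = - ⟪b, D.comm a c⟫ := by
  have h := D.inner_comm_self (a + b) c
  have ha := D.inner_comm_self a c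
  have hb := D.inner_comm_self b c
  simp only [comm, map_add, LinearMap.add_apply, inner_add_left, inner_sub_right,
    inner_add_right] at h ha hb ⊢
  linarith

theorem inner_assoc_swap (a b c d : A) : ⟪a, D.assoc b c d⟫ = - ⟪b, D.assoc a c d⟫ := by
  have h := D.inner_assoc_self (a + b) c d
  have ha := D.inner_assoc_self a c d
  have hb := D.inner_assoc_self b c d
  simp only [assoc, map_add, LinearMap.add_apply, inner_add_left, inner_sub_right,
    inner_add_right] at h ha hb ⊢
  linarith

end NormedDivisionAlgebra

theorem nda_inner_comm_assoc_skew {A : Type*} [NormedAddCommGroup A] [InnerProductSpace ℝ A]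
    (D : NormedDivisionAlgebra A) :
    (∀ a b : A, ⟪a, D.comm a b⟫ = 0) ∧
      (∀ a b c : A, ⟪a, D.assoc a b c⟫ = 0) ∧
      (∀ a b c : A, ⟪a, D.comm b c⟫ = - ⟪b, D.comm a c⟫) ∧
      (∀ a b c : A, ⟪a, D.comm b c⟫ = - ⟪a, D.comm c b⟫) ∧
      (∀ a b c d : A, ⟪a, D.assoc b c d⟫ = - ⟪b, D.assoc a c d⟫) ∧
      (∀ a b c d : A, ⟪a, D.assoc b c d⟫ = - ⟪a, D.assoc c b d⟫) ∧
      (∀ a b c d : A, ⟪a, D.assoc b c d⟫ = - ⟪a, D.assoc b d c⟫) := by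
  refine ⟨D.inner_comm_self, D.inner_assoc_self, D.inner_comm_swap, fun a b c => ?_,
    D.inner_assoc_swap, fun a b c d => ?_, fun a b c d => ?_⟩
  · rw [← inner_neg_right, NormedDivisionAlgebra.comm, NormedDivisionAlgebra.comm, neg_sub]
  · rw [D.assoc_swap_left b c d, inner_neg_right]
  · rw [D.assoc_swap_right b c d, inner_neg_right]
end

section
/- Let A be a normed division algebra and let a, b, c ∈ Im A be orthonormal (that is, ‖a‖ = ‖b‖ = ‖c‖ = 1 and ⟨a,b⟩ = ⟨b,c⟩ = ⟨a,c⟩ = 0) with a × b = c. Then b × c = a and c × a = b. -/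
open scoped RealInnerProductSpace

/-!
Polarizing `‖a * x‖ = ‖a‖ ‖x‖` shows that left multiplication `L_a` by an imaginary `a` is
skew-adjoint and that `L_a L_b + L_b L_a = -2⟪a, b⟫` for imaginary `a, b`. Hence for orthogonal
imaginary `x, y` we get `y * (x * y) = -x * (y * y) = ‖y‖² x`. With `c = a * b` this gives
`b * c = a`, and applied once more to the pair `b, c` it gives `c * a = c * (b * c) = b`.
-/

namespace NormedDivisionAlgebra

variable {A : Type*} [NormedAddCommGroup A] [InnerProductSpace ℝ A] (D : NormedDivisionAlgebra A)

lemma inner_mul_mul_left (a x y : A) :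
    ⟪D.mul a x, D.mul a y⟫ = ‖a‖ ^ 2 * ⟪x, y⟫ := by
  rw [real_inner_eq_norm_add_mul_self_sub_norm_mul_self_sub_norm_mul_self_div_two,
    real_inner_eq_norm_add_mul_self_sub_norm_mul_self_sub_norm_mul_self_div_two x y,
    ← map_add, D.norm_mul, D.norm_mul, D.norm_mul]
  ring

lemma inner_mul_mul_add_inner_mul_mul (a b x y : A) :
    ⟪D.mul a x, D.mul b y⟫ + ⟪D.mul b x, D.mul a y⟫ = 2 * ⟪a, b⟫ * ⟪x, y⟫ := by
  have h := D.inner_mul_mul_left (a + b) x y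
  rw [map_add, LinearMap.add_apply, LinearMap.add_apply, inner_add_left, inner_add_right,
    inner_add_right, inner_mul_mul_left, inner_mul_mul_left, norm_add_sq_real] at h
  linarith

lemma mem_ImSub_iff {x : A} : x ∈ D.ImSub ↔ ⟪x, D.one⟫ = 0 :=
  Submodule.mem_orthogonal_singleton_iff_inner_left

lemma im_eq_self_of_mem_ImSub {x : A} (hx : x ∈ D.ImSub) : D.im x = x := by
  simp [im, re, D.mem_ImSub_iff.mp hx]

lemma inner_mul_left_of_mem_ImSub {a : A} (ha : a ∈ D.ImSub) (x y : A) :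
    ⟪D.mul a x, y⟫ = -⟪x, D.mul a y⟫ := by
  have h := D.inner_mul_mul_add_inner_mul_mul a D.one x y
  rw [D.one_mul, D.one_mul, D.mem_ImSub_iff.mp ha] at h
  linarith

lemma mul_mem_ImSub {x y : A} (hx : x ∈ D.ImSub) (hxy : ⟪x, y⟫ = 0) : D.mul x y ∈ D.ImSub := by
  rw [D.mem_ImSub_iff, D.inner_mul_left_of_mem_ImSub hx, D.mul_one, real_inner_comm, hxy, neg_zero]

lemma cross_eq_mul {x y : A} (hx : x ∈ D.ImSub) (hxy : ⟪x, y⟫ = 0) :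
    D.cross x y = D.mul x y :=
  D.im_eq_self_of_mem_ImSub (D.mul_mem_ImSub hx hxy)

lemma mul_self_of_mem_ImSub {a : A} (ha : a ∈ D.ImSub) : D.mul a a = (-‖a‖ ^ 2) • D.one := by
  refine ext_inner_right ℝ fun v => ?_
  calc ⟪D.mul a a, v⟫ = -⟪D.mul a D.one, D.mul a v⟫ := by
        rw [D.inner_mul_left_of_mem_ImSub ha, D.mul_one]
    _ = ⟪(-‖a‖ ^ 2) • D.one, v⟫ := by
        rw [inner_mul_mul_left, real_inner_smul_left]
        ring

lemma mul_mul_add_mul_mul_of_mem_ImSub {a b : A} (ha : a ∈ D.ImSub) (hb : b ∈ D.ImSub) (x : A) :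
    D.mul a (D.mul b x) + D.mul b (D.mul a x) = (-(2 * ⟪a, b⟫)) • x := by
  refine ext_inner_right ℝ fun v => ?_
  have h := D.inner_mul_mul_add_inner_mul_mul b a x v
  rw [real_inner_comm a b] at h
  rw [inner_add_left, D.inner_mul_left_of_mem_ImSub ha (D.mul b x),
    D.inner_mul_left_of_mem_ImSub hb (D.mul a x), real_inner_smul_left]
  linarith

lemma mul_mul_mul_of_inner_eq_zero {x y : A} (hx : x ∈ D.ImSub) (hy : y ∈ D.ImSub)
    (hxy : ⟪x, y⟫ = 0) : D.mul y (D.mul x y) = ‖y‖ ^ 2 • x := by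
  have h := D.mul_mul_add_mul_mul_of_mem_ImSub hy hx y
  rw [real_inner_comm, hxy, D.mul_self_of_mem_ImSub hy, map_smul, D.mul_one] at h
  linear_combination (norm := module) h

end NormedDivisionAlgebra

theorem nda_cross_orthonormal_triple_general {A : Type*} [NormedAddCommGroup A]
    [InnerProductSpace ℝ A] (D : NormedDivisionAlgebra A) (a b c : A)
    (ha : a ∈ D.ImSub) (hb : b ∈ D.ImSub) (hc : c ∈ D.ImSub)
    (hnb : ‖b‖ = 1) (hnc : ‖c‖ = 1)
    (hab : ⟪a, b⟫ = 0) (hbc : ⟪b, c⟫ = 0)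
    (habc : D.cross a b = c) :
    D.cross b c = a ∧ D.cross c a = b := by
  have hmul_ab : D.mul a b = c := (D.cross_eq_mul ha hab).symm.trans habc
  have hmul_bc : D.mul b c = a := by
    rw [← hmul_ab, D.mul_mul_mul_of_inner_eq_zero ha hb hab, hnb, one_pow, one_smul]
  have hmul_ca : D.mul c a = b := by
    rw [← hmul_bc, D.mul_mul_mul_of_inner_eq_zero hb hc hbc, hnc, one_pow, one_smul]
  exact ⟨by rw [NormedDivisionAlgebra.cross, hmul_bc, D.im_eq_self_of_mem_ImSub ha],
    by rw [NormedDivisionAlgebra.cross, hmul_ca, D.im_eq_self_of_mem_ImSub hb]⟩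

theorem nda_cross_orthonormal_triple {A : Type*} [NormedAddCommGroup A]
    [InnerProductSpace ℝ A] (D : NormedDivisionAlgebra A) (a b c : A)
    (ha : a ∈ D.ImSub) (hb : b ∈ D.ImSub) (hc : c ∈ D.ImSub)
    (hna : ‖a‖ = 1) (hnb : ‖b‖ = 1) (hnc : ‖c‖ = 1)
    (hab : ⟪a, b⟫ = 0) (hbc : ⟪b, c⟫ = 0) (hac : ⟪a, c⟫ = 0)
    (habc : D.cross a b = c) :
    D.cross b c = a ∧ D.cross c a = b :=
  nda_cross_orthonormal_triple_general D a b c ha hb hc hnb hnc hab hbc habc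
end
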